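/- First intersector theorem: let p, q, k be integers with p, q ≥ 1, p ≡ q (mod 2), and k ≥ κ, where κ = 1 if q < p+1 and κ = 0 if q > p+1. Set p' = q−1+k, q' = p+1+k and m₀ = p+q+k−1. Then: (i) h^{m₀}_{p,q} = h^{m₀}_{p',q'}; (ii) if u, v are positive integers with u ≡ v (mod 2) and uv ≤ p'q', and m is a real number with m ≥ m₀ such that h^m_{p,q} = h^m_{u,v}, then either (u,v) = (p,q), or (u,v) = (p',q') and m = m₀. (Thus C_{q−1+k, p+1+k} is the first curve of level p'q'/2 to intersect C_{p,q} starting from c = 3/2, the intersection occurring at m = p+q+k−1.) -/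

import Mathlib

/-!
Clearing the denominator, `h^m_{p,q} = h^m_{u,v}` says `(m+2)u − mv = ±((m+2)p − mq)`, and by
parity the two signs read `m c = u − p` and `m t = p + u` with integers `c`, `t`.
For `m ≥ m₀ = p + q + k − 1` a nonzero multiplier forces `u ≥ p' = q − 1 + k` and
`v ≥ q' = p + 1 + k`, so `uv ≤ p'q'` pins `(u, v) = (p', q')`. That is impossible for the
`+` sign, and for the `−` sign it forces `t = 1`, i.e. `m = p + p' = m₀`.
-/

/-- `h^m_{p,q} = (((m+2)p − mq)² − 4) / (8m(m+2))`. -/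
noncomputable def hPQ (m : ℝ) (p q : ℤ) : ℝ :=
  (((m + 2) * (p : ℝ) - m * (q : ℝ)) ^ 2 - 4) / (8 * m * (m + 2))

theorem eq_and_eq_of_le_of_le_of_mul_le {α : Type*} [Semiring α] [PartialOrder α]
    [IsStrictOrderedRing α] {a b u v : α} (ha : 0 < a) (hb : 0 < b) (hau : a ≤ u)
    (hbv : b ≤ v) (h : u * v ≤ a * b) : u = a ∧ v = b := by
  have hprod : a * b = u * v :=
    le_antisymm (mul_le_mul hau hbv hb.le (ha.trans_le hau).le) h
  obtain ⟨rfl, rfl⟩ := (mul_eq_mul_iff_eq_and_eq_of_pos hau hbv ha (hb.trans_le hbv)).1 hprod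
  exact ⟨rfl, rfl⟩

theorem Int.mul_le_of_le_of_mul_eq {m : ℝ} {a c n : ℤ} (ham : (a : ℝ) ≤ m) (hc : 0 ≤ c)
    (h : m * c = n) : a * c ≤ n := by
  have : (a : ℝ) * c ≤ n := h ▸ mul_le_mul_of_nonneg_right ham (by exact_mod_cast hc)
  exact_mod_cast this

theorem Int.le_mul_of_le_of_mul_eq {m : ℝ} {a c n : ℤ} (ham : (a : ℝ) ≤ m) (hc : c ≤ 0)
    (h : m * c = n) : n ≤ a * c := by
  have : (n : ℝ) ≤ a * c := h ▸ mul_le_mul_of_nonpos_right ham (by exact_mod_cast hc)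
  exact_mod_cast this

theorem hPQ_eq_hPQ_iff {m : ℝ} (hm : m ≠ 0) (hm2 : m + 2 ≠ 0) (p q u v : ℤ) :
    hPQ m p q = hPQ m u v ↔
      ((m + 2) * p - m * q) ^ 2 = ((m + 2) * u - m * v) ^ 2 := by
  have hden : 8 * m * (m + 2) ≠ 0 := by positivity
  rw [hPQ, hPQ, div_left_inj' hden, sub_left_inj]

theorem exists_of_hPQ_eq_hPQ {m : ℝ} (hm : 0 < m) {p q u v : ℤ} (hpq : p % 2 = q % 2)
    (huv : u % 2 = v % 2) (h : hPQ m p q = hPQ m u v) :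
    (∃ c : ℤ, m * c = ((u - p : ℤ) : ℝ) ∧ v = q + u - p + 2 * c) ∨
      (∃ t : ℤ, m * t = ((p + u : ℤ) : ℝ) ∧ v = p + u - q + 2 * t) := by
  rw [hPQ_eq_hPQ_iff hm.ne' (by positivity), sq_eq_sq_iff_eq_or_eq_neg] at h
  rcases h with h | h
  · obtain ⟨c, hc⟩ : ∃ c, v = q + u - p + 2 * c := ⟨(p - q - u + v) / 2, by omega⟩
    refine .inl ⟨c, ?_, hc⟩
    push_cast
    have hcR : (v : ℝ) = q + u - p + 2 * c := by exact_mod_cast hc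
    rw [hcR] at h
    linear_combination h / 2
  · obtain ⟨t, ht⟩ : ∃ t, v = p + u - q + 2 * t := ⟨(q + v - p - u) / 2, by omega⟩
    refine .inr ⟨t, ?_, ht⟩
    push_cast
    have htR : (v : ℝ) = p + u - q + 2 * t := by exact_mod_cast ht
    rw [htR] at h
    linear_combination -h / 2

theorem hPQ_add_eq_hPQ (p q u : ℤ) :
    hPQ ((p + u : ℤ) : ℝ) p q = hPQ ((p + u : ℤ) : ℝ) u (p + u - q + 2) := by
  simp only [hPQ]
  push_cast
  ring

section FirstIntersector

variable {p q k u v : ℤ} {m : ℝ}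

theorem first_intersector_of_mul_eq_sub (hp : 1 ≤ p) (hq : 1 ≤ q) (hk : 0 ≤ k)
    (hqk : 2 ≤ q + k) (hu : 1 ≤ u) (huv : u * v ≤ (q - 1 + k) * (p + 1 + k))
    (hm : ((p + q + k - 1 : ℤ) : ℝ) ≤ m) {c : ℤ}
    (hc : m * c = ((u - p : ℤ) : ℝ)) (hv : v = q + u - p + 2 * c) : u = p ∧ v = q := by
  rcases lt_trichotomy c 0 with hneg | rfl | hpos
  · have hle := Int.le_mul_of_le_of_mul_eq hm hneg.le hc
    have hle' : (p + q + k - 1) * c ≤ -(p + q + k - 1) := by nlinarith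
    omega
  · have : u = p := by exact_mod_cast (by simpa [sub_eq_zero, eq_comm] using hc : (u : ℝ) = p)
    omega
  · have hle := Int.mul_le_of_le_of_mul_eq hm hpos.le hc
    have : p + q + k - 1 ≤ (p + q + k - 1) * c := le_mul_of_one_le_right (by omega) hpos
    have hbox := eq_and_eq_of_le_of_le_of_mul_le (a := q - 1 + k) (b := p + 1 + k)
      (by omega) (by omega) (by omega) (by omega) huv
    omega

theorem first_intersector_of_mul_eq_add (hp : 1 ≤ p) (hk : 0 ≤ k) (hqk : 2 ≤ q + k) (hu : 1 ≤ u)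
    (huv : u * v ≤ (q - 1 + k) * (p + 1 + k)) (hm : ((p + q + k - 1 : ℤ) : ℝ) ≤ m) {t : ℤ}
    (ht : m * t = ((p + u : ℤ) : ℝ)) (hv : v = p + u - q + 2 * t) :
    u = q - 1 + k ∧ v = p + 1 + k ∧ m = ((p + q + k - 1 : ℤ) : ℝ) := by
  have ht_pos : 0 < t := by
    by_contra! hnonpos
    have := Int.le_mul_of_le_of_mul_eq hm hnonpos ht
    have : (p + q + k - 1) * t ≤ 0 := Int.mul_nonpos_of_nonneg_of_nonpos (by omega) hnonpos
    omega
  have hle := Int.mul_le_of_le_of_mul_eq hm ht_pos.le ht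
  have : p + q + k - 1 ≤ (p + q + k - 1) * t := le_mul_of_one_le_right (by omega) ht_pos
  obtain ⟨rfl, rfl⟩ := eq_and_eq_of_le_of_le_of_mul_le (a := q - 1 + k) (b := p + 1 + k)
    (by omega) (by omega) (by omega) (by omega) huv
  have ht_one : t = 1 := by nlinarith
  subst ht_one
  refine ⟨rfl, by omega, ?_⟩
  rw [Int.cast_one, mul_one] at ht
  rw [ht]
  push_cast
  ring

end FirstIntersector

/-- First intersector theorem: for `p, q ≥ 1` of the same parity, `κ = 1` if `q < p+1`
and `κ = 0` if `q > p+1`, and `k ≥ κ`, set `p' = q−1+k`, `q' = p+1+k`, `m₀ = p+q+k−1`.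
Then `C_{p',q'}` meets `C_{p,q}` at `m = m₀`, and it is the first curve of level
`p'q'/2` to intersect `C_{p,q}` starting from `c = 3/2`: any curve `C_{u,v}` of level
`≤ p'q'/2` through a point of `C_{p,q}` with `m ≥ m₀` is `C_{p,q}` itself, or is
`C_{p',q'}` with `m = m₀`. -/
theorem first_intersector (p q k : ℤ) (hp : 1 ≤ p) (hq : 1 ≤ q) (hpar : p % 2 = q % 2)
    (hk : (if q < p + 1 then (1 : ℤ) else 0) ≤ k) :
    hPQ ((p + q + k - 1 : ℤ) : ℝ) p q = hPQ ((p + q + k - 1 : ℤ) : ℝ) (q - 1 + k) (p + 1 + k) ∧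
    (∀ u v : ℤ, 1 ≤ u → 1 ≤ v → u % 2 = v % 2 → u * v ≤ (q - 1 + k) * (p + 1 + k) →
      ∀ m : ℝ, ((p + q + k - 1 : ℤ) : ℝ) ≤ m → hPQ m p q = hPQ m u v →
        (u = p ∧ v = q) ∨
        (u = q - 1 + k ∧ v = p + 1 + k ∧ m = ((p + q + k - 1 : ℤ) : ℝ))) := by
  have hk0 : 0 ≤ k := by split_ifs at hk <;> omega
  have hqk : 2 ≤ q + k := by split_ifs at hk <;> omega
  constructor
  · have h := hPQ_add_eq_hPQ p q (q - 1 + k)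
    rwa [show p + (q - 1 + k) = p + q + k - 1 by ring,
      show p + q + k - 1 - q + 2 = p + 1 + k by ring] at h
  · intro u v hu _ huv hprod m hm h
    have hm₀_pos : (0 : ℝ) < ((p + q + k - 1 : ℤ) : ℝ) := by exact_mod_cast (by omega)
    have hm_pos : 0 < m := hm₀_pos.trans_le hm
    rcases exists_of_hPQ_eq_hPQ hm_pos hpar huv h with ⟨c, hc, hv⟩ | ⟨t, ht, hv⟩
    · exact .inl (first_intersector_of_mul_eq_sub hp hq hk0 hqk hu hprod hm hc hv)
    · exact .inr (first_intersector_of_mul_eq_add hp hk0 hqk hu hprod hm ht hv)
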